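/- arXiv:2502.04987 — 2 statements merged into one kernel-verified Lean document; each statement's English description precedes it below -/
import Mathlib

section
/- For symmetric positive semidefinite R ∈ ℝ^{n×n} and B ∈ ℝ^{n×m}, the matrix R + BBᵀ is positive definite if and only if the block matrix [R B] ∈ ℝ^{n×(n+m)} has rank n. -/
open Matrix
open scoped ComplexOrder

/-!
For positive semidefinite `A`, `star x ⬝ᵥ A *ᵥ x = 0` forces `A *ᵥ x = 0`, so the kernel of
`R + B * Bᴴ` is `ker R ∩ ker Bᴴ`, which is the kernel of `[R B]ᴴ`. A positive semidefinite matrix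
is positive definite iff its kernel is trivial, and `[R B]` has rank `n` iff `[R B]ᴴ` has trivial
kernel.
-/

namespace Matrix

theorem rank_eq_card_width_iff_mulVec_injective {m n K : Type*} [Field K] [Fintype n]
    (A : Matrix m n K) : A.rank = Fintype.card n ↔ Function.Injective A.mulVec := by
  rw [mulVec_injective_iff, rank_eq_finrank_span_cols, linearIndependent_iff_card_eq_finrank_span,
    Set.finrank, eq_comm]

variable {n m 𝕜 : Type*} [Fintype n] [RCLike 𝕜]

theorem PosSemidef.posDef_iff_mulVec_injective {A : Matrix n n 𝕜} (hA : A.PosSemidef) :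
    A.PosDef ↔ Function.Injective A.mulVec := by
  classical
  rw [hA.posDef_iff_isUnit, mulVec_injective_iff_isUnit]

theorem PosSemidef.add_mulVec_eq_zero_iff {A B : Matrix n n 𝕜} (hA : A.PosSemidef)
    (hB : B.PosSemidef) (x : n → 𝕜) : (A + B) *ᵥ x = 0 ↔ A *ᵥ x = 0 ∧ B *ᵥ x = 0 := by
  rw [← (hA.add hB).dotProduct_mulVec_zero_iff, ← hA.dotProduct_mulVec_zero_iff,
    ← hB.dotProduct_mulVec_zero_iff, add_mulVec, dotProduct_add]
  exact add_eq_zero_iff_of_nonneg (hA.dotProduct_mulVec_nonneg x) (hB.dotProduct_mulVec_nonneg x)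

theorem PosSemidef.posDef_add_mul_conjTranspose_iff_rank_fromCols [Fintype m]
    {R : Matrix n n 𝕜} (hR : R.PosSemidef) (B : Matrix n m 𝕜) :
    (R + B * Bᴴ).PosDef ↔ (fromCols R B).rank = Fintype.card n := by
  have hBBh := posSemidef_self_mul_conjTranspose B
  have hker (x : n → 𝕜) : (R + B * Bᴴ) *ᵥ x = 0 ↔ fromRows Rᴴ Bᴴ *ᵥ x = 0 := by
    rw [hR.add_mulVec_eq_zero_iff hBBh, self_mul_conjTranspose_mulVec_eq_zero, fromRows_mulVec,
      ← Sum.elim_zero_zero, Sum.elim_eq_iff, hR.isHermitian.eq]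
  rw [← rank_conjTranspose, conjTranspose_fromCols_eq_fromRows_conjTranspose,
    rank_eq_card_width_iff_mulVec_injective, (hR.add hBBh).posDef_iff_mulVec_injective,
    ← coe_mulVecLin, ← coe_mulVecLin, injective_iff_map_eq_zero, injective_iff_map_eq_zero]
  simp only [mulVecLin_apply, hker]

end Matrix

/-- for symmetric PSD `R`, the matrix `R + BBᵀ` is positive
definite iff the block matrix `[R B]` has full rank `n`. -/
theorem stmt4 {n m : ℕ}
    (R : Matrix (Fin n) (Fin n) ℝ) (B : Matrix (Fin n) (Fin m) ℝ)
    (hR : R.PosSemidef) :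
    (R + B * Bᵀ).PosDef ↔ (Matrix.fromCols R B).rank = n := by
  simpa only [conjTranspose_eq_transpose_of_trivial, Fintype.card_fin] using
    hR.posDef_add_mul_conjTranspose_iff_rank_fromCols B
end

section
/- Let H: ℝⁿ → ℝ, η̄: ℝⁿ×ℝⁿ → ℝⁿ satisfy the discrete gradient property H(z₂) − H(z₁) = η̄(z₁,z₂)ᵀ(z₂−z₁). Let r: ℝⁿ → ℝⁿ satisfy vᵀ r(v) ≥ 0 for all v, and let B̄: ℝⁿ×ℝⁿ → ℝ^{n×m}. Suppose z_{i+1} = z_i − h·r(η̄(z_i,z_{i+1})) + h·B̄(z_i,z_{i+1})ū for some h > 0 and ū ∈ ℝᵐ. Then (H(z_{i+1}) − H(z_i))/h = −η̄(z_i,z_{i+1})ᵀ r(η̄(z_i,z_{i+1})) + ȳᵀū ≤ ȳᵀū, where ȳ = B̄(z_i,z_{i+1})ᵀ η̄(z_i,z_{i+1}). -/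
open Matrix

/-- discrete power balance for one step of the discrete
gradient scheme. -/
theorem stmt10 {n m : ℕ}
    (H : (Fin n → ℝ) → ℝ)
    (ηbar : (Fin n → ℝ) → (Fin n → ℝ) → (Fin n → ℝ))
    (hdg : ∀ z₁ z₂, H z₂ - H z₁ = ηbar z₁ z₂ ⬝ᵥ (z₂ - z₁))
    (r : (Fin n → ℝ) → (Fin n → ℝ))
    (hr : ∀ v, 0 ≤ v ⬝ᵥ r v)
    (Bbar : (Fin n → ℝ) → (Fin n → ℝ) → Matrix (Fin n) (Fin m) ℝ)
    (h : ℝ) (hh : 0 < h) (ubar : Fin m → ℝ)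
    (zi zi1 : Fin n → ℝ)
    (hstep : zi1 = zi - h • r (ηbar zi zi1) + h • (Bbar zi zi1 *ᵥ ubar))
    (ybar : Fin m → ℝ) (hy : ybar = (Bbar zi zi1)ᵀ *ᵥ ηbar zi zi1) :
    (H zi1 - H zi) / h
        = -(ηbar zi zi1 ⬝ᵥ r (ηbar zi zi1)) + ybar ⬝ᵥ ubar ∧
    (H zi1 - H zi) / h ≤ ybar ⬝ᵥ ubar := by
  have hdiff : zi1 - zi = -(h • r (ηbar zi zi1)) + h • (Bbar zi zi1 *ᵥ ubar) := by
    conv_lhs => rw [hstep]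
    abel
  have key : H zi1 - H zi = h * (-(ηbar zi zi1 ⬝ᵥ r (ηbar zi zi1)) + ybar ⬝ᵥ ubar) := by
    rw [hdg zi zi1, hdiff, hy, dotProduct_add, dotProduct_neg, dotProduct_smul,
      dotProduct_smul, dotProduct_mulVec, Matrix.mulVec_transpose]
    simp [smul_eq_mul]; ring
  have heq : (H zi1 - H zi) / h = -(ηbar zi zi1 ⬝ᵥ r (ηbar zi zi1)) + ybar ⬝ᵥ ubar := by
    rw [key]; field_simp
  refine ⟨heq, ?_⟩
  rw [heq]
  linarith [hr (ηbar zi zi1)]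
end
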